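/- arXiv:1201.1433 — 3 statements merged into one kernel-verified Lean document; each statement's English description precedes it below -/
import Mathlib

section
/- Let ψ : ℝ → ℝ be a positive, twice continuously differentiable probability density, x ∈ ℝ with ψ'(x) ≠ 0, θ > 0, and let A_n = { ε : ψ(x + θε/√n) > ψ(x) }. Then lim_{n→∞} √n ( ∫_{A_n} ε φ(ε) dε + ∫_{A_n^c} (ψ(x + θε/√n)/ψ(x)) ε φ(ε) dε ) = (θ/2)·ψ'(x)/ψ(x), where φ is the standard normal density. -/
/-!
Write `r = ψ (x + θ ε / √n) / ψ x`. Because `∫ ε φ = 0`, the bracket equals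
`∫ min 0 (r - 1) ε φ`, which vanishes on `A_n = {r > 1}` and is `(r - 1) ε φ` off it.
Pointwise `√n (r - 1) → θ ε ψ'(x) / ψ(x)`, and `√n |min 0 (r - 1)| ≤ C |ε|`: near `x` by the
Lipschitz bound on `ψ`, far away because `r ≥ 0` forces `|min 0 (r - 1)| ≤ 1`. Dominated
convergence then gives `∫ min 0 (c ε) ε φ = c / 2`, as `∫ ε² φ = 1` and `|ε| ε φ` is odd.
-/

open MeasureTheory Filter Set Topology ProbabilityTheory
open scoped NNReal

namespace ProbabilityTheory

lemma integrable_gaussianReal_iff_integrable_mul {μ : ℝ} {v : ℝ≥0} (hv : v ≠ 0)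
    {f : ℝ → ℝ} :
    Integrable f (gaussianReal μ v) ↔ Integrable (fun x ↦ f x * gaussianPDFReal μ v x) := by
  rw [gaussianReal_of_var_ne_zero μ hv, integrable_withDensity_iff_integrable_smul'
    (measurable_gaussianPDF μ v) (ae_of_all _ fun _ ↦ gaussianPDF_lt_top)]
  simp only [toReal_gaussianPDF, smul_eq_mul, mul_comm]

lemma integral_gaussianReal_eq_integral_mul {μ : ℝ} {v : ℝ≥0} (hv : v ≠ 0) (f : ℝ → ℝ) :
    ∫ x, f x ∂gaussianReal μ v = ∫ x, f x * gaussianPDFReal μ v x := by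
  simp only [integral_gaussianReal_eq_integral_smul hv, smul_eq_mul, mul_comm]

lemma integrable_mul_gaussianPDFReal (μ : ℝ) {v : ℝ≥0} (hv : v ≠ 0) :
    Integrable (fun x ↦ x * gaussianPDFReal μ v x) :=
  (integrable_gaussianReal_iff_integrable_mul hv).1
    ((memLp_id_gaussianReal 1).integrable le_rfl)

lemma integral_mul_gaussianPDFReal (μ : ℝ) {v : ℝ≥0} (hv : v ≠ 0) :
    ∫ x, x * gaussianPDFReal μ v x = μ := by
  rw [← integral_gaussianReal_eq_integral_mul hv, integral_id_gaussianReal]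

lemma integrable_sq_mul_gaussianPDFReal (μ : ℝ) {v : ℝ≥0} (hv : v ≠ 0) :
    Integrable (fun x ↦ x ^ 2 * gaussianPDFReal μ v x) :=
  (integrable_gaussianReal_iff_integrable_mul hv).1 (memLp_id_gaussianReal 2).integrable_sq

lemma integral_sq_mul_gaussianPDFReal {v : ℝ≥0} (hv : v ≠ 0) :
    ∫ x, x ^ 2 * gaussianPDFReal 0 v x = v := by
  rw [← integral_gaussianReal_eq_integral_mul hv]
  exact (variance_of_integral_eq_zero measurable_id.aemeasurable
    integral_id_gaussianReal).symm.trans variance_id_gaussianReal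

lemma gaussianPDFReal_zero_neg (v : ℝ≥0) (x : ℝ) :
    gaussianPDFReal 0 v (-x) = gaussianPDFReal 0 v x := by
  simp [gaussianPDFReal]

end ProbabilityTheory

lemma integral_eq_zero_of_odd {f : ℝ → ℝ} (hf : ∀ x, f (-x) = -f x) : ∫ x, f x = 0 := by
  have h := integral_neg_eq_self f volume
  simp only [hf, integral_neg] at h
  linarith

lemma min_zero_eq_sub_abs_div_two (a : ℝ) : min 0 a = (a - |a|) / 2 := by
  rcases le_total a 0 with h | h
  · rw [min_eq_right h, abs_of_nonpos h]; ring
  · rw [min_eq_left h, abs_of_nonneg h]; ring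

lemma integral_min_zero_mul_mul_gaussianPDFReal (c : ℝ) :
    ∫ x, min 0 (c * x) * (x * gaussianPDFReal 0 1 x) = c / 2 := by
  have hsq := integrable_sq_mul_gaussianPDFReal 0 one_ne_zero
  have habs : Integrable (fun x ↦ |x| * x * gaussianPDFReal 0 1 x) := by
    refine hsq.mono' (by fun_prop) (ae_of_all _ fun x ↦ ?_)
    rw [Real.norm_eq_abs, abs_mul, abs_mul, abs_abs, abs_mul_abs_self, ← sq,
      abs_of_nonneg (gaussianPDFReal_nonneg 0 1 x)]
  have hodd : ∫ x, |x| * x * gaussianPDFReal 0 1 x = 0 :=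
    integral_eq_zero_of_odd fun x ↦ by rw [gaussianPDFReal_zero_neg, abs_neg]; ring
  have hsplit : ∀ x, min 0 (c * x) * (x * gaussianPDFReal 0 1 x)
      = c / 2 * (x ^ 2 * gaussianPDFReal 0 1 x)
        - |c| / 2 * (|x| * x * gaussianPDFReal 0 1 x) :=
    fun x ↦ by rw [min_zero_eq_sub_abs_div_two, abs_mul]; ring
  simp_rw [hsplit]
  rw [integral_sub (hsq.const_mul _) (habs.const_mul _), integral_const_mul, integral_const_mul,
    integral_sq_mul_gaussianPDFReal one_ne_zero, hodd]
  simp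

lemma abs_min_zero_sub_one_le_one {r : ℝ} (hr : 0 ≤ r) : |min 0 (r - 1)| ≤ 1 :=
  abs_le.2 ⟨le_min (by norm_num) (by linarith), (min_le_left _ _).trans zero_le_one⟩

lemma setIntegral_add_setIntegral_compl_eq_integral_add_integral_min {α : Type*}
    [MeasurableSpace α] {μ : Measure α} {g r : α → ℝ} (hg : Integrable g μ) (hr : Measurable r)
    (hr0 : ∀ a, 0 ≤ r a) :
    ∫ a in {a | 1 < r a}, g a ∂μ + ∫ a in {a | 1 < r a}ᶜ, r a * g a ∂μ
      = ∫ a, g a ∂μ + ∫ a, min 0 (r a - 1) * g a ∂μ := by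
  set A := {a | 1 < r a}
  have hA : MeasurableSet A := measurableSet_lt measurable_const hr
  have hmin : Integrable (fun a ↦ min 0 (r a - 1) * g a) μ := by
    refine hg.norm.mono' ((measurable_const.min (hr.sub measurable_const)).aestronglyMeasurable.mul
      hg.aestronglyMeasurable) (ae_of_all _ fun a ↦ ?_)
    rw [norm_mul]
    exact mul_le_of_le_one_left (norm_nonneg _) (abs_min_zero_sub_one_le_one (hr0 a))
  have hminA : ∫ a in A, min 0 (r a - 1) * g a ∂μ = 0 := by
    refine setIntegral_eq_zero_of_forall_eq_zero fun a (ha : 1 < r a) ↦ ?_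
    rw [min_eq_left (by linarith), zero_mul]
  have hAc : ∫ a in Aᶜ, r a * g a ∂μ = ∫ a in Aᶜ, (g a + min 0 (r a - 1) * g a) ∂μ := by
    refine setIntegral_congr_fun hA.compl fun a (ha : ¬ 1 < r a) ↦ ?_
    rw [min_eq_right (by linarith [not_lt.1 ha])]
    ring
  rw [hAc, integral_add hg.integrableOn hmin.integrableOn, ← integral_add_compl hA hg,
    ← integral_add_compl hA hmin, hminA]
  ring

lemma tendsto_mul_sub_of_hasDerivAt {ι : Type*} {l : Filter ι} {f : ℝ → ℝ} {f' x : ℝ}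
    (hf : HasDerivAt f f' x) {s : ι → ℝ} (hs : Tendsto s l atTop) (a : ℝ) :
    Tendsto (fun i ↦ s i * (f (x + a / s i) - f x)) l (𝓝 (a * f')) := by
  rcases eq_or_ne a 0 with rfl | ha
  · simpa using tendsto_const_nhds
  have hh : Tendsto (fun i ↦ a / s i) l (𝓝[≠] 0) := by
    refine tendsto_nhdsWithin_of_tendsto_nhds_of_eventually_within _
      (tendsto_const_nhds.div_atTop hs) ?_
    filter_upwards [hs.eventually_gt_atTop 0] with i hi
    exact div_ne_zero ha hi.ne'
  refine ((hasDerivAt_iff_tendsto_slope_zero.1 hf).comp hh).const_mul a |>.congr' ?_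
  filter_upwards [hs.eventually_gt_atTop 0] with i hi
  simp only [Function.comp_apply, smul_eq_mul]
  field_simp

lemma abs_min_zero_le_abs (b : ℝ) : |min 0 b| ≤ |b| := by
  simpa using abs_min_le_max_abs_abs (a := 0) (b := b)

lemma mul_abs_min_zero_sub_one_le {f : ℝ → ℝ} {x : ℝ} {K : ℝ≥0}
    (hlip : LipschitzOnWith K f (Icc (x - 1) (x + 1))) (hf0 : ∀ y, 0 ≤ f y) (hfx : f x = 1)
    {s : ℝ} (hs : 0 ≤ s) (a : ℝ) :
    s * |min 0 (f (x + a / s) - 1)| ≤ (K + 1) * |a| := by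
  rcases hs.eq_or_lt with rfl | hs'
  · simp only [zero_mul]; positivity
  rcases le_or_gt |a| s with has | hsa
  · have hdiv : |a / s| ≤ 1 := by rw [abs_div, abs_of_pos hs']; exact div_le_one_of_le₀ has hs
    have hmem : ∀ t, |t| ≤ 1 → x + t ∈ Icc (x - 1) (x + 1) := fun t ht ↦ by
      constructor <;> linarith [abs_le.1 ht]
    have hL := hlip.dist_le_mul (x + a / s) (hmem _ hdiv) x ⟨by linarith, by linarith⟩
    rw [Real.dist_eq, Real.dist_eq, hfx, add_sub_cancel_left] at hL
    calc s * |min 0 (f (x + a / s) - 1)| ≤ s * (K * |a / s|) :=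
          mul_le_mul_of_nonneg_left ((abs_min_zero_le_abs _).trans hL) hs
      _ = K * |a| := by rw [abs_div, abs_of_pos hs']; field_simp
      _ ≤ (K + 1) * |a| := by nlinarith [abs_nonneg a]
  · calc s * |min 0 (f (x + a / s) - 1)| ≤ s * 1 :=
          mul_le_mul_of_nonneg_left (abs_min_zero_sub_one_le_one (hf0 _)) hs
      _ ≤ (K + 1) * |a| := by nlinarith [abs_nonneg a, K.2]

theorem tendsto_mul_integral_min_zero_sub_one {f g : ℝ → ℝ} (hf : ContDiff ℝ 1 f)
    (hf0 : ∀ y, 0 ≤ f y) {x : ℝ} (hfx : f x = 1) (hg : AEStronglyMeasurable g)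
    (hεg : Integrable fun ε ↦ ε * g ε) {s : ℕ → ℝ} (hs : Tendsto s atTop atTop)
    (hs0 : ∀ n, 0 ≤ s n) (θ : ℝ) :
    Tendsto (fun n ↦ s n * ∫ ε, min 0 (f (x + θ * ε / s n) - 1) * g ε) atTop
      (𝓝 (∫ ε, min 0 (θ * deriv f x * ε) * g ε)) := by
  obtain ⟨K, hK⟩ :=
    hf.contDiffOn.exists_lipschitzOnWith one_ne_zero (convex_Icc (x - 1) (x + 1)) isCompact_Icc
  simp_rw [← integral_const_mul]
  refine tendsto_integral_of_dominated_convergence (fun ε ↦ (K + 1) * |θ| * ‖ε * g ε‖)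
    (fun n ↦ ?_) (hεg.norm.const_mul _) (fun n ↦ ae_of_all _ fun ε ↦ ?_)
    (ae_of_all _ fun ε ↦ ?_)
  · have := hf.continuous
    fun_prop
  · calc ‖s n * (min 0 (f (x + θ * ε / s n) - 1) * g ε)‖
        = s n * |min 0 (f (x + θ * ε / s n) - 1)| * ‖g ε‖ := by
          rw [norm_mul, norm_mul, Real.norm_of_nonneg (hs0 n), Real.norm_eq_abs, mul_assoc]
      _ ≤ (K + 1) * |θ * ε| * ‖g ε‖ :=
          mul_le_mul_of_nonneg_right (mul_abs_min_zero_sub_one_le hK hf0 hfx (hs0 n) _)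
            (norm_nonneg _)
      _ = (K + 1) * |θ| * ‖ε * g ε‖ := by rw [norm_mul, abs_mul, Real.norm_eq_abs ε]; ring
  · have hlim := tendsto_mul_sub_of_hasDerivAt (hf.differentiable one_ne_zero x).hasDerivAt hs
      (θ * ε)
    rw [hfx, mul_right_comm] at hlim
    refine ((tendsto_const_nhds.min hlim).mul_const (g ε)).congr fun n ↦ ?_
    rw [← mul_assoc, mul_min_of_nonneg _ _ (hs0 n), mul_zero]

theorem stmt_5_general (ψ : ℝ → ℝ) (x θ : ℝ) (φ : ℝ → ℝ)
    (hφ : φ = fun ε => (Real.sqrt (2 * Real.pi))⁻¹ * Real.exp (-ε ^ 2 / 2))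
    (hψpos : ∀ y, 0 < ψ y) (hψC2 : ContDiff ℝ 2 ψ)
    (A : ℕ → Set ℝ)
    (hA : ∀ n, A n = {ε : ℝ | ψ x < ψ (x + θ * ε / Real.sqrt n)}) :
    Tendsto (fun n : ℕ => Real.sqrt n *
        ((∫ ε in A n, ε * φ ε) +
          ∫ ε in (A n)ᶜ, (ψ (x + θ * ε / Real.sqrt n) / ψ x) * ε * φ ε))
      atTop (nhds ((θ / 2) * (deriv ψ x / ψ x))) := by
  obtain rfl : φ = gaussianPDFReal 0 1 := by rw [hφ]; ext ε; simp [gaussianPDFReal]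
  have hψx := hψpos x
  have hf : ContDiff ℝ 1 fun y ↦ ψ y / ψ x := (hψC2.of_le one_le_two).div_const _
  have hψc : Continuous ψ := hψC2.continuous
  have hf0 : ∀ y, 0 ≤ ψ y / ψ x := fun y ↦ (div_pos (hψpos y) hψx).le
  have hsplit : ∀ n : ℕ, (∫ ε in A n, ε * gaussianPDFReal 0 1 ε) +
      ∫ ε in (A n)ᶜ, ψ (x + θ * ε / √n) / ψ x * ε * gaussianPDFReal 0 1 ε
      = ∫ ε, min 0 (ψ (x + θ * ε / √n) / ψ x - 1) * (ε * gaussianPDFReal 0 1 ε) := fun n ↦ by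
    have hAn : A n = {ε | 1 < ψ (x + θ * ε / √n) / ψ x} := by
      rw [hA n]; ext ε; exact (one_lt_div hψx).symm
    simp_rw [hAn, mul_assoc]
    rw [setIntegral_add_setIntegral_compl_eq_integral_add_integral_min
      (integrable_mul_gaussianPDFReal 0 one_ne_zero)
      (by fun_prop : Measurable fun ε ↦ ψ (x + θ * ε / √n) / ψ x) fun ε ↦ hf0 _,
      integral_mul_gaussianPDFReal 0 one_ne_zero, zero_add]
  have hlim := tendsto_mul_integral_min_zero_sub_one hf hf0 (div_self hψx.ne')
    (integrable_mul_gaussianPDFReal 0 one_ne_zero).aestronglyMeasurable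
    ((integrable_sq_mul_gaussianPDFReal 0 one_ne_zero).congr (ae_of_all _ fun ε ↦ by ring))
    (Real.tendsto_sqrt_atTop.comp tendsto_natCast_atTop_atTop) (fun n ↦ Real.sqrt_nonneg n) θ
  rw [integral_min_zero_mul_mul_gaussianPDFReal, deriv_div_const, mul_div_right_comm] at hlim
  exact hlim.congr fun n ↦ congrArg _ (hsplit n).symm

/-- Limiting drift coefficient b₁ of the adaptive MCMC x-component:
√n (∫_{A_n} ε φ + ∫_{A_n^c} (ψ(x+θε/√n)/ψ(x)) ε φ) → (θ/2) ψ'(x)/ψ(x). -/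
theorem stmt_5 (ψ : ℝ → ℝ) (x θ : ℝ) (φ : ℝ → ℝ)
    (hφ : φ = fun ε => (Real.sqrt (2 * Real.pi))⁻¹ * Real.exp (-ε ^ 2 / 2))
    (hψpos : ∀ y, 0 < ψ y) (hψC2 : ContDiff ℝ 2 ψ)
    (hψint : ∫ y, ψ y = 1)
    (hbdd : ∃ δ > (0:ℝ), ∃ M, ∀ y ∈ Set.Ioo (x - δ) (x + δ), |deriv (deriv ψ) y| ≤ M)
    (hd : deriv ψ x ≠ 0) (hθ : 0 < θ)
    (A : ℕ → Set ℝ)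
    (hA : ∀ n, A n = {ε : ℝ | ψ x < ψ (x + θ * ε / Real.sqrt n)}) :
    Tendsto (fun n : ℕ => Real.sqrt n *
        ((∫ ε in A n, ε * φ ε) +
          ∫ ε in (A n)ᶜ, (ψ (x + θ * ε / Real.sqrt n) / ψ x) * ε * φ ε))
      atTop (nhds ((θ / 2) * (deriv ψ x / ψ x))) :=
  stmt_5_general ψ x θ φ hφ hψpos hψC2 A hA
end

section
/- Let ψ be a positive C² probability density with ψ'(x) ≠ 0 and bounded second derivative near x, θ > 0, and A_n = { ε : ψ(x + θε/√n) > ψ(x) }. Then lim_{n→∞} ( ∫_{A_n} φ(ε) dε + ∫_{A_n^c} (ψ(x + θε/√n)/ψ(x)) φ(ε) dε − 1 )·√n = −(θ/√(2π))·|ψ'(x)|/ψ(x). -/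
open MeasureTheory Filter Topology Real Set ProbabilityTheory

/-!
With `r n ε = ψ (x + θ ε / √n) / ψ x` we have `A n = {1 < r n}`, so the bracket is the mean
acceptance probability minus one, `∫ min (r n ε - 1) 0 φ ε`; times `√n` its integrand is
`min (√n (ψ (x + θ ε / √n) - ψ x)) 0 φ ε / ψ x`. This tends pointwise to
`min (ψ' x θ ε) 0 φ ε / ψ x` and is dominated by `K |ε| φ ε`: for small increments because `ψ` is
`C¹`, hence locally Lipschitz, and for large ones because `ψ ≥ 0` bounds the negative part of
`ψ (x + h) - ψ x` by `ψ x`. Dominated convergence and `∫ min (a ε) 0 φ ε dε = -|a| / √(2π)`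
conclude.
-/

lemma gaussianPDFReal_zero_one_apply (ε : ℝ) :
    gaussianPDFReal 0 1 ε = (√(2 * π))⁻¹ * rexp (-ε ^ 2 / 2) := by
  simp [gaussianPDFReal]

lemma gaussianPDFReal_zero_one_abs (ε : ℝ) : gaussianPDFReal 0 1 |ε| = gaussianPDFReal 0 1 ε := by
  simp [gaussianPDFReal_zero_one_apply]

lemma integrable_mul_gaussianPDFReal_zero_one :
    Integrable fun ε : ℝ ↦ ε * gaussianPDFReal 0 1 ε := by
  refine ((integrable_mul_exp_neg_mul_sq (b := 1 / 2) (by norm_num)).const_mul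
    (√(2 * π))⁻¹).congr (.of_forall fun ε ↦ ?_)
  simp only [gaussianPDFReal_zero_one_apply]
  ring_nf

lemma integrable_abs_mul_gaussianPDFReal_zero_one :
    Integrable fun ε : ℝ ↦ |ε| * gaussianPDFReal 0 1 ε :=
  integrable_mul_gaussianPDFReal_zero_one.norm.congr (.of_forall fun ε ↦ by
    simp [abs_of_nonneg (gaussianPDFReal_nonneg 0 1 ε)])

lemma integral_mul_gaussianPDFReal_zero_one : ∫ ε, ε * gaussianPDFReal 0 1 ε = 0 := by
  simpa [integral_id_gaussianReal, mul_comm] using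
    (integral_gaussianReal_eq_integral_smul (μ := 0) (f := id) one_ne_zero).symm

lemma integral_Ioi_mul_exp_neg_sq_div_two : ∫ ε in Ioi (0 : ℝ), ε * rexp (-ε ^ 2 / 2) = 1 := by
  have h := integral_mul_cexp_neg_mul_sq (b := 1 / 2) (by norm_num)
  norm_num at h
  apply Complex.ofReal_injective
  rw [← integral_complex_ofReal, Complex.ofReal_one, ← h]
  congr with ε
  push_cast
  ring_nf

lemma integral_abs_mul_gaussianPDFReal_zero_one :
    ∫ ε, |ε| * gaussianPDFReal 0 1 ε = 2 / √(2 * π) := by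
  have h := integral_comp_abs (f := fun ε ↦ ε * gaussianPDFReal 0 1 ε)
  simp only [gaussianPDFReal_zero_one_abs] at h
  rw [h]
  simp only [gaussianPDFReal_zero_one_apply, mul_left_comm _ (√(2 * π))⁻¹, integral_const_mul,
    integral_Ioi_mul_exp_neg_sq_div_two]
  ring

lemma integral_min_mul_gaussianPDFReal_zero_one (a : ℝ) :
    ∫ ε, min (a * ε) 0 * gaussianPDFReal 0 1 ε = -|a| / √(2 * π) := by
  have hmin : ∀ ε : ℝ, min (a * ε) 0 = (a * ε - |a| * |ε|) / 2 := fun ε ↦ by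
    rw [← abs_mul]
    rcases le_total (a * ε) 0 with h | h
    · rw [min_eq_left h, abs_of_nonpos h]; ring
    · rw [min_eq_right h, abs_of_nonneg h]; ring
  have hint := integrable_mul_gaussianPDFReal_zero_one
  have hint_abs := integrable_abs_mul_gaussianPDFReal_zero_one
  calc ∫ ε, min (a * ε) 0 * gaussianPDFReal 0 1 ε
      = ∫ ε, (a / 2 * (ε * gaussianPDFReal 0 1 ε) - |a| / 2 * (|ε| * gaussianPDFReal 0 1 ε)) := by
        congr with ε; rw [hmin]; ring
    _ = -|a| / √(2 * π) := by
        rw [integral_sub (hint.const_mul _) (hint_abs.const_mul _), integral_const_mul,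
          integral_const_mul, integral_mul_gaussianPDFReal_zero_one,
          integral_abs_mul_gaussianPDFReal_zero_one]
        ring

lemma ContDiffAt.exists_abs_min_sub_le {f : ℝ → ℝ} {x : ℝ} (hf : ContDiffAt ℝ 1 f x)
    (hf0 : ∀ y, 0 ≤ f y) : ∃ K, ∀ h, |min (f (x + h) - f x) 0| ≤ K * |h| := by
  obtain ⟨L, t, ht, hL⟩ := hf.exists_lipschitzOnWith
  obtain ⟨δ, hδ, hball⟩ := Metric.mem_nhds_iff.mp ht
  refine ⟨max (L : ℝ) (f x / δ), fun h ↦ ?_⟩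
  by_cases hh : |h| < δ
  · have hxh : x + h ∈ t := hball (by simpa [Metric.mem_ball, dist_eq_norm] using hh)
    calc |min (f (x + h) - f x) 0| ≤ |f (x + h) - f x| := by
          simpa using abs_min_le_max_abs_abs (a := f (x + h) - f x) (b := 0)
      _ ≤ L * |h| := by
          simpa [dist_eq_norm] using hL.dist_le_mul _ hxh _ (hball (Metric.mem_ball_self hδ))
      _ ≤ max (L : ℝ) (f x / δ) * |h| := by gcongr; exact le_max_left _ _
  · calc |min (f (x + h) - f x) 0| ≤ f x := by
          rw [abs_le]
          exact ⟨le_min (by linarith [hf0 (x + h)]) (by linarith [hf0 x]),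
            (min_le_right _ _).trans (hf0 x)⟩
      _ ≤ f x / δ * |h| := by
          rw [div_mul_eq_mul_div, le_div_iff₀ hδ]
          exact mul_le_mul_of_nonneg_left (not_lt.mp hh) (hf0 x)
      _ ≤ max (L : ℝ) (f x / δ) * |h| := by gcongr; exact le_max_right _ _

lemma ContDiffAt.exists_abs_min_mul_sub_le {f : ℝ → ℝ} {x : ℝ} (hf : ContDiffAt ℝ 1 f x)
    (hf0 : ∀ y, 0 ≤ f y) :
    ∃ K, ∀ s, 0 ≤ s → ∀ h, |min (s * (f (x + h / s) - f x)) 0| ≤ K * |h| := by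
  obtain ⟨K, hK⟩ := hf.exists_abs_min_sub_le hf0
  refine ⟨K, fun s hs h ↦ ?_⟩
  rcases hs.eq_or_lt with rfl | hs
  · simpa using (abs_nonneg _).trans (hK h)
  calc |min (s * (f (x + h / s) - f x)) 0| = s * |min (f (x + h / s) - f x) 0| := by
        rw [← abs_of_pos hs, ← abs_mul, mul_min_of_nonneg _ _ hs.le, mul_zero, abs_of_pos hs]
    _ ≤ s * (K * |h / s|) := by gcongr; exact hK _
    _ = K * |h| := by rw [abs_div, abs_of_pos hs]; field_simp

lemma HasDerivAt.tendsto_mul_sub {f : ℝ → ℝ} {f' x : ℝ} (hf : HasDerivAt f f' x) (h : ℝ) :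
    Tendsto (fun s : ℝ ↦ s * (f (x + h / s) - f x)) atTop (𝓝 (f' * h)) := by
  have hline : HasDerivAt (fun t ↦ f (x + h * t)) (f' * h) 0 := by
    have := ((hasDerivAt_id (0 : ℝ)).const_mul h).const_add x
    simp only [id, mul_one] at this
    exact hf.comp_of_eq 0 this (by simp)
  refine (hline.tendsto_slope_zero_right.comp tendsto_inv_atTop_nhdsGT_zero).congr fun s ↦ ?_
  simp [div_eq_mul_inv]

theorem ContDiffAt.tendsto_integral_min_mul_sub {f φ : ℝ → ℝ} {x : ℝ} (θ : ℝ)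
    (hf : ContDiffAt ℝ 1 f x) (hfm : Measurable f) (hf0 : ∀ y, 0 ≤ f y)
    (hφ : AEStronglyMeasurable φ) (hφint : Integrable fun ε ↦ |ε| * φ ε) :
    Tendsto (fun s : ℝ ↦ ∫ ε, min (s * (f (x + θ * ε / s) - f x)) 0 * φ ε) atTop
      (𝓝 (∫ ε, min (deriv f x * θ * ε) 0 * φ ε)) := by
  obtain ⟨K, hK⟩ := hf.exists_abs_min_mul_sub_le hf0
  refine tendsto_integral_filter_of_dominated_convergence (fun ε ↦ K * |θ| * ‖|ε| * φ ε‖)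
    (.of_forall fun s ↦ ?_) ?_ (hφint.norm.const_mul _) (.of_forall fun ε ↦ ?_)
  · have : Measurable fun ε ↦ min (s * (f (x + θ * ε / s) - f x)) 0 := by fun_prop
    exact this.aestronglyMeasurable.mul hφ
  · filter_upwards [eventually_ge_atTop 0] with s hs
    refine .of_forall fun ε ↦ ?_
    simp only [norm_mul, Real.norm_eq_abs, abs_abs]
    calc |min (s * (f (x + θ * ε / s) - f x)) 0| * |φ ε| ≤ K * |θ * ε| * |φ ε| := by
          gcongr; exact hK s hs _
      _ = K * |θ| * (|ε| * |φ ε|) := by rw [abs_mul]; ring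
  · rw [mul_assoc (deriv f x)]
    exact (((hf.differentiableAt one_ne_zero).hasDerivAt.tendsto_mul_sub (θ * ε)).min
      tendsto_const_nhds).mul_const _

theorem setIntegral_add_setIntegral_compl_sub_one {α : Type*} [MeasurableSpace α] {μ : Measure α}
    {φ r : α → ℝ} (hφ : Integrable φ μ) (hφ1 : ∫ a, φ a ∂μ = 1) (hr : Measurable r)
    (hr0 : ∀ a, 0 ≤ r a) :
    (∫ a in {a | 1 < r a}, φ a ∂μ) + (∫ a in {a | 1 < r a}ᶜ, r a * φ a ∂μ) - 1
      = ∫ a, min (r a - 1) 0 * φ a ∂μ := by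
  have hA : MeasurableSet {a | 1 < r a} := measurableSet_lt measurable_const hr
  have hint : Integrable (fun a ↦ min (r a) 1 * φ a) μ :=
    hφ.bdd_mul (c := 1) (by fun_prop) (.of_forall fun a ↦ by
      rw [Real.norm_eq_abs, abs_le]
      exact ⟨by linarith [le_min (hr0 a) zero_le_one], min_le_right _ _⟩)
  have h_on : ∫ a in {a | 1 < r a}, φ a ∂μ = ∫ a in {a | 1 < r a}, min (r a) 1 * φ a ∂μ :=
    setIntegral_congr_fun hA fun a ha ↦ by rw [min_eq_right (le_of_lt ha), one_mul]
  have h_off : ∫ a in {a | 1 < r a}ᶜ, r a * φ a ∂μ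
      = ∫ a in {a | 1 < r a}ᶜ, min (r a) 1 * φ a ∂μ :=
    setIntegral_congr_fun hA.compl fun a (ha : ¬1 < r a) ↦ by rw [min_eq_left (not_lt.mp ha)]
  have h_sub : (∫ a, min (r a) 1 * φ a ∂μ) - 1 = ∫ a, (min (r a) 1 * φ a - φ a) ∂μ := by
    rw [integral_sub hint hφ, hφ1]
  rw [h_on, h_off, integral_add_compl hA hint, h_sub]
  congr with a
  rw [← sub_self (1 : ℝ), min_sub_sub_right]
  ring

lemma min_div_sub_one_mul {a c s : ℝ} (hc : 0 < c) (hs : 0 ≤ s) :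
    min (a / c - 1) 0 * s = min (s * (a - c)) 0 / c := by
  rw [← min_div_div_right hc.le, zero_div, mul_div_assoc, ← div_sub_one hc.ne', mul_comm,
    mul_min_of_nonneg _ _ hs, mul_zero]

theorem stmt_6_general (ψ : ℝ → ℝ) (x θ : ℝ) (φ : ℝ → ℝ)
    (hφ : φ = fun ε => (Real.sqrt (2 * Real.pi))⁻¹ * Real.exp (-ε ^ 2 / 2))
    (hψpos : ∀ y, 0 < ψ y) (hψC2 : ContDiff ℝ 2 ψ)
    (hθ : 0 < θ)
    (A : ℕ → Set ℝ)
    (hA : ∀ n, A n = {ε : ℝ | ψ x < ψ (x + θ * ε / Real.sqrt n)}) :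
    Tendsto (fun n : ℕ =>
        ((∫ ε in A n, φ ε) +
          (∫ ε in (A n)ᶜ, (ψ (x + θ * ε / Real.sqrt n) / ψ x) * φ ε) - 1) * Real.sqrt n)
      atTop (nhds (-(θ / Real.sqrt (2 * Real.pi)) * (|deriv ψ x| / ψ x))) := by
  obtain rfl : φ = gaussianPDFReal 0 1 :=
    hφ.trans (funext fun ε ↦ (gaussianPDFReal_zero_one_apply ε).symm)
  have hc := hψpos x
  have hψ : ContDiff ℝ 1 ψ := hψC2.of_le (by norm_num)
  have hψm : Measurable ψ := hψ.continuous.measurable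
  have hrewrite (n : ℕ) : ((∫ ε in A n, gaussianPDFReal 0 1 ε) +
      (∫ ε in (A n)ᶜ, (ψ (x + θ * ε / √n) / ψ x) * gaussianPDFReal 0 1 ε) - 1) * √n
      = (∫ ε, min (√n * (ψ (x + θ * ε / √n) - ψ x)) 0 * gaussianPDFReal 0 1 ε) / ψ x := by
    have hAn : A n = {ε | 1 < ψ (x + θ * ε / √n) / ψ x} := by simp_rw [hA n, one_lt_div hc]
    rw [hAn, setIntegral_add_setIntegral_compl_sub_one (r := fun ε ↦ ψ (x + θ * ε / √n) / ψ x)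
      (integrable_gaussianPDFReal 0 1) (integral_gaussianPDFReal_eq_one 0 one_ne_zero) (by fun_prop)
      (fun ε ↦ (div_pos (hψpos _) hc).le), ← integral_mul_const, ← integral_div]
    congr with ε
    rw [mul_right_comm, min_div_sub_one_mul hc (sqrt_nonneg _), div_mul_eq_mul_div]
  have hlim := ((hψ.contDiffAt (x := x)).tendsto_integral_min_mul_sub θ hψm
    (fun y ↦ (hψpos y).le) (measurable_gaussianPDFReal 0 1).aestronglyMeasurable
    integrable_abs_mul_gaussianPDFReal_zero_one).comp
    (tendsto_sqrt_atTop.comp tendsto_natCast_atTop_atTop)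
  have hvalue : -(θ / √(2 * π)) * (|deriv ψ x| / ψ x)
      = (∫ ε, min (deriv ψ x * θ * ε) 0 * gaussianPDFReal 0 1 ε) / ψ x := by
    rw [integral_min_mul_gaussianPDFReal_zero_one, abs_mul, abs_of_pos hθ]
    ring
  rw [hvalue]
  exact (hlim.div_const (ψ x)).congr fun n ↦ (hrewrite n).symm

/-- First-order asymptotics of the mean acceptance probability:
√n (∫_{A_n} φ + ∫_{A_n^c} (ψ(x+θε/√n)/ψ(x)) φ − 1) → −(θ/√(2π)) |ψ'(x)|/ψ(x). -/
theorem stmt_6 (ψ : ℝ → ℝ) (x θ : ℝ) (φ : ℝ → ℝ)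
    (hφ : φ = fun ε => (Real.sqrt (2 * Real.pi))⁻¹ * Real.exp (-ε ^ 2 / 2))
    (hψpos : ∀ y, 0 < ψ y) (hψC2 : ContDiff ℝ 2 ψ)
    (hψint : ∫ y, ψ y = 1)
    (hbdd : ∃ δ > (0:ℝ), ∃ M, ∀ y ∈ Set.Ioo (x - δ) (x + δ), |deriv (deriv ψ) y| ≤ M)
    (hd : deriv ψ x ≠ 0) (hθ : 0 < θ)
    (A : ℕ → Set ℝ)
    (hA : ∀ n, A n = {ε : ℝ | ψ x < ψ (x + θ * ε / Real.sqrt n)}) :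
    Tendsto (fun n : ℕ =>
        ((∫ ε in A n, φ ε) +
          (∫ ε in (A n)ᶜ, (ψ (x + θ * ε / Real.sqrt n) / ψ x) * φ ε) - 1) * Real.sqrt n)
      atTop (nhds (-(θ / Real.sqrt (2 * Real.pi)) * (|deriv ψ x| / ψ x))) :=
  stmt_6_general ψ x θ φ hφ hψpos hψC2 hθ A hA
end

section
/- Suppose q_n ∈ [0,1] with √n(1 − q_n) → c ≥ 0 and p_n = 1 − p/√n with p > 0. If ξ_n ∼ Bernoulli(q_n), then n·E[e^{(ξ_n − p_n)/√n} − 1] = √n·(q_n − p_n) + (1/2)E[(ξ_n − p_n)²] + o(1) → p − c. -/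
open MeasureTheory Filter

lemma slope_exp' : Tendsto (fun x : ℝ => (Real.exp x - 1) / x) (nhdsWithin 0 {0}ᶜ) (nhds 1) := by
  have h := Real.hasDerivAt_exp (0:ℝ)
  rw [hasDerivAt_iff_tendsto_slope] at h
  simpa [slope_fun_def, Real.exp_zero, div_eq_inv_mul] using h

lemma sqrt_tendsto' : Tendsto (fun n : ℕ => Real.sqrt n) atTop atTop := by
  have h := (tendsto_rpow_atTop (y := (1/2:ℝ)) (by norm_num)).comp tendsto_natCast_atTop_atTop
  refine h.congr fun n => ?_
  rw [Function.comp_apply, ← Real.sqrt_eq_rpow]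

-- n(e^{p/n} - 1) → p
lemma T1' (p : ℝ) (hp : 0 < p) :
    Tendsto (fun n : ℕ => (n : ℝ) * (Real.exp (p / n) - 1)) atTop (nhds p) := by
  have hx : Tendsto (fun n : ℕ => p / (n : ℝ)) atTop (nhdsWithin 0 {0}ᶜ) := by
    rw [tendsto_nhdsWithin_iff]
    constructor
    · exact Tendsto.div_atTop tendsto_const_nhds tendsto_natCast_atTop_atTop
    · filter_upwards [eventually_ge_atTop 1] with n hn
      have hn' : (0:ℝ) < n := by exact_mod_cast hn
      simp [Set.mem_compl_iff, div_ne_zero hp.ne' hn'.ne']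
  have := (slope_exp'.comp hx).mul_const p
  rw [one_mul] at this
  apply this.congr'
  filter_upwards [eventually_ge_atTop 1] with n hn
  have hn' : (0:ℝ) < n := by exact_mod_cast hn
  rw [Function.comp_apply, div_div_eq_mul_div, div_mul_cancel₀ _ hp.ne', mul_comm]

-- √n(e^{(0 - (1 - p/√n))/√n} - 1) → -1
lemma T2' (p : ℝ) (hp : 0 < p) :
    Tendsto (fun n : ℕ => Real.sqrt n *
      (Real.exp ((0 - (1 - p / Real.sqrt n)) / Real.sqrt n) - 1)) atTop (nhds (-1)) := by
  set x : ℕ → ℝ := fun n => (0 - (1 - p / Real.sqrt n)) / Real.sqrt n with hxdef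
  have hev : ∀ᶠ n : ℕ in atTop, 0 < Real.sqrt n ∧ p < Real.sqrt n := by
    filter_upwards [sqrt_tendsto'.eventually_gt_atTop p, sqrt_tendsto'.eventually_gt_atTop 0]
      with n h1 h2 using ⟨h2, h1⟩
  have hxneg : ∀ᶠ n : ℕ in atTop, x n < 0 := by
    filter_upwards [hev] with n hn
    obtain ⟨h0, hp'⟩ := hn
    have : p / Real.sqrt n < 1 := (div_lt_one h0).2 hp'
    have hnum : (0 : ℝ) - (1 - p / Real.sqrt n) < 0 := by linarith
    exact div_neg_of_neg_of_pos hnum h0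
  have hps : Tendsto (fun n : ℕ => p / Real.sqrt n) atTop (nhds 0) :=
    Tendsto.div_atTop tendsto_const_nhds sqrt_tendsto'
  have h1s : Tendsto (fun n : ℕ => 1 / Real.sqrt n) atTop (nhds 0) :=
    Tendsto.div_atTop tendsto_const_nhds sqrt_tendsto'
  have hx0 : Tendsto x atTop (nhds 0) := by
    have h : Tendsto (fun n : ℕ => (p / Real.sqrt n - 1) * (1 / Real.sqrt n)) atTop
        (nhds 0) := by
      have := (hps.sub (tendsto_const_nhds (x := (1:ℝ)))).mul h1s
      simpa using this
    apply h.congr fun n => ?_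
    simp only [hxdef]
    ring
  have hxne : Tendsto x atTop (nhdsWithin 0 {0}ᶜ) := by
    rw [tendsto_nhdsWithin_iff]
    exact ⟨hx0, hxneg.mono fun n hn => by simpa using hn.ne⟩
  have hsx : Tendsto (fun n : ℕ => Real.sqrt n * x n) atTop (nhds (-1)) := by
    have h : Tendsto (fun n : ℕ => p / Real.sqrt n - 1) atTop (nhds (-1)) := by
      have := hps.sub (tendsto_const_nhds (x := (1:ℝ)))
      simpa using this
    apply h.congr'
    filter_upwards [hev] with n hn
    obtain ⟨h0, _⟩ := hn
    simp only [hxdef]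
    rw [mul_comm, div_mul_cancel₀ _ h0.ne']
    ring
  have hprod := (slope_exp'.comp hxne).mul hsx
  rw [one_mul] at hprod
  apply hprod.congr'
  filter_upwards [hxneg] with n hn
  have hne : x n ≠ 0 := hn.ne
  simp only [Function.comp_apply]
  field_simp
  ring

/-- If √n(1 − q_n) → c ≥ 0, p_n = 1 − p/√n, and ξ_n ∼ Bernoulli(q_n), then
n E[e^{(ξ_n − p_n)/√n} − 1] → p − c (the limiting θ-drift, up to the factor θ). -/
theorem stmt_18 {Ω : Type*} [MeasurableSpace Ω] (μ : Measure Ω) [IsProbabilityMeasure μ]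
    (ξ : ℕ → Ω → ℝ) (q : ℕ → ℝ) (p c : ℝ) (hp : 0 < p) (hc : 0 ≤ c)
    (hmeas : ∀ n, Measurable (ξ n))
    (hval : ∀ n ω, ξ n ω = 0 ∨ ξ n ω = 1)
    (hq01 : ∀ n, q n ∈ Set.Icc (0 : ℝ) 1)
    (hq : ∀ n, μ {ω | ξ n ω = 1} = ENNReal.ofReal (q n))
    (hqlim : Tendsto (fun n : ℕ => Real.sqrt n * (1 - q n)) atTop (nhds c)) :
    Tendsto (fun n : ℕ => (n : ℝ) *
        ∫ ω, (Real.exp ((ξ n ω - (1 - p / Real.sqrt n)) / Real.sqrt n) - 1) ∂μ)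
      atTop (nhds (p - c)) := by
  -- the integral formula
  have hint : ∀ n, (∫ ω, (Real.exp ((ξ n ω - (1 - p / Real.sqrt n)) / Real.sqrt n) - 1) ∂μ)
      = q n * (Real.exp ((1 - (1 - p / Real.sqrt n)) / Real.sqrt n) - 1)
        + (1 - q n) * (Real.exp ((0 - (1 - p / Real.sqrt n)) / Real.sqrt n) - 1) := by
    intro n
    set B : ℝ := Real.exp ((1 - (1 - p / Real.sqrt n)) / Real.sqrt n) - 1 with hBdef
    set A' : ℝ := Real.exp ((0 - (1 - p / Real.sqrt n)) / Real.sqrt n) - 1 with hAdef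
    set A := {ω | ξ n ω = 1} with hA
    have hAm : MeasurableSet A := (hmeas n) (measurableSet_singleton 1)
    have hfun : (fun ω => Real.exp ((ξ n ω - (1 - p / Real.sqrt n)) / Real.sqrt n) - 1)
        = fun ω => A.indicator (fun _ => B) ω + Aᶜ.indicator (fun _ => A') ω := by
      funext ω
      rcases hval n ω with h0 | h1
      · have hωA : ω ∉ A := by simp [hA, h0]
        simp [Set.indicator_of_notMem hωA, Set.indicator_of_mem (Set.mem_compl hωA),
          hAdef, h0]
      · have hωA : ω ∈ A := by simp [hA, h1]
        simp [Set.indicator_of_mem hωA,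
          Set.indicator_of_notMem (by simp [hωA] : ω ∉ Aᶜ), hBdef, h1]
    rw [hfun, integral_add
      ((integrable_const B).indicator hAm)
      ((integrable_const A').indicator hAm.compl),
      integral_indicator_const _ hAm, integral_indicator_const _ hAm.compl]
    have hμA : μ A = ENNReal.ofReal (q n) := hq n
    have hq0 := (hq01 n).1
    have hq1 := (hq01 n).2
    have hμAc : μ Aᶜ = ENNReal.ofReal (1 - q n) := by
      rw [measure_compl hAm (measure_ne_top μ A), measure_univ, hμA,
        ← ENNReal.ofReal_one, ← ENNReal.ofReal_sub _ hq0]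
    rw [measureReal_def, measureReal_def, hμA, hμAc, ENNReal.toReal_ofReal hq0, ENNReal.toReal_ofReal (by linarith)]
    simp [smul_eq_mul]
  -- q n → 1
  have hq1 : Tendsto q atTop (nhds 1) := by
    have h1s : Tendsto (fun n : ℕ => 1 / Real.sqrt n) atTop (nhds 0) :=
      Tendsto.div_atTop tendsto_const_nhds sqrt_tendsto'
    have hprod : Tendsto (fun n : ℕ => (Real.sqrt n * (1 - q n)) * (1 / Real.sqrt n))
        atTop (nhds 0) := by simpa using hqlim.mul h1s
    have h1q : Tendsto (fun n : ℕ => 1 - q n) atTop (nhds 0) := by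
      apply hprod.congr'
      filter_upwards [sqrt_tendsto'.eventually_gt_atTop 0] with n h0
      field_simp
    have h := (tendsto_const_nhds (x := (1:ℝ)) (f := atTop (α := ℕ))).sub h1q
    simpa using h
  -- combine
  have hmain : Tendsto (fun n : ℕ =>
      q n * ((n : ℝ) * (Real.exp (p / n) - 1))
      + (Real.sqrt n * (1 - q n)) *
        (Real.sqrt n * (Real.exp ((0 - (1 - p / Real.sqrt n)) / Real.sqrt n) - 1)))
      atTop (nhds (p - c)) := by
    have heq : (1:ℝ) * p + c * (-1) = p - c := by ring
    rw [← heq]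
    exact (hq1.mul (T1' p hp)).add (hqlim.mul (T2' p hp))
  apply hmain.congr'
  filter_upwards [eventually_ge_atTop 1] with n hn
  have hn' : (0:ℝ) < n := by exact_mod_cast hn
  have hs : Real.sqrt n * Real.sqrt n = n := Real.mul_self_sqrt (le_of_lt hn')
  rw [hint n]
  have hbn : Real.exp ((1 - (1 - p / Real.sqrt n)) / Real.sqrt n) - 1
      = Real.exp (p / n) - 1 := by
    rw [sub_sub_cancel, div_div, hs]
  rw [hbn]
  set s := Real.sqrt n with hsdef
  rw [← hs]
  ring
end
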